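/- Let k ≥ 1 be a natural number, let A be a k × k real matrix, let c > 0 be a real number, and let A ⊙ A denote the Hadamard (entrywise) product of A with itself. Then trace((1 + (c/k) • (A ⊙ A))^k) − k = 0 if and only if the directed graph on {0, …, k−1} with an edge from i to j whenever A i j ≠ 0 has no directed cycle, i.e., there is no m ≥ 1 and no sequence of vertices i_0, i_1, …, i_m with i_0 = i_m and A (i_s) (i_{s+1}) ≠ 0 for all 0 ≤ s < m. -/
import Mathlib
open Matrix Finset

section Aux
variable {k : ℕ} (B : Matrix (Fin k) (Fin k) ℝ)

lemma pow_entry_nonneg (hB : ∀ i j, 0 ≤ B i j) : ∀ (n : ℕ) (i j : Fin k), 0 ≤ (B ^ n) i j := by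
  intro n
  induction n with
  | zero => intro i j; simp [Matrix.one_apply]; positivity
  | succ n ih =>
      intro i j
      rw [pow_succ, Matrix.mul_apply]
      exact Finset.sum_nonneg fun x _ => mul_nonneg (ih i x) (hB x j)

lemma path_pow_pos (hB : ∀ i j, 0 ≤ B i j) (v : ℕ → Fin k) :
    ∀ n : ℕ, (∀ s < n, 0 < B (v s) (v (s+1))) → 0 < (B ^ n) (v 0) (v n) := by
  intro n
  induction n with
  | zero => intro _; simp [Matrix.one_apply]
  | succ n ih =>
      intro h
      have h1 : 0 < (B ^ n) (v 0) (v n) := ih fun s hs => h s (Nat.lt_succ_of_lt hs)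
      have h2 : 0 < B (v n) (v (n+1)) := h n (Nat.lt_succ_self n)
      rw [pow_succ, Matrix.mul_apply]
      have := Finset.single_le_sum
        (f := fun x => (B ^ n) (v 0) x * B x (v (n+1)))
        (fun x _ => mul_nonneg (pow_entry_nonneg B hB n _ _) (hB _ _))
        (Finset.mem_univ (v n))
      exact lt_of_lt_of_le (mul_pos h1 h2) this

lemma pow_entry_path :
    ∀ (n : ℕ) (i j : Fin k), (B ^ n) i j ≠ 0 →
      ∃ v : ℕ → Fin k, v 0 = i ∧ v n = j ∧ ∀ s < n, B (v s) (v (s+1)) ≠ 0 := by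
  intro n
  induction n with
  | zero =>
      intro i j h
      simp only [pow_zero] at h
      have : i = j := by
        by_contra hij
        exact h (Matrix.one_apply_ne hij)
      exact ⟨fun _ => i, rfl, this ▸ rfl, fun s hs => absurd hs (Nat.not_lt_zero s)⟩
  | succ n ih =>
      intro i j h
      rw [pow_succ, Matrix.mul_apply] at h
      obtain ⟨x, -, hx⟩ := Finset.exists_ne_zero_of_sum_ne_zero h
      have h1 : (B ^ n) i x ≠ 0 := fun h0 => hx (by rw [h0, zero_mul])
      have h2 : B x j ≠ 0 := fun h0 => hx (by rw [h0, mul_zero])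
      obtain ⟨v, hv0, hvn, hve⟩ := ih i x h1
      refine ⟨fun s => if s ≤ n then v s else j, by simp [hv0], by simp, ?_⟩
      intro s hs
      rcases Nat.lt_succ_iff_lt_or_eq.mp hs with hlt | heq
      · have : s ≤ n := hlt.le
        simp only [this, if_pos, Nat.succ_le_of_lt hlt, if_pos]
        exact hve s hlt
      · subst heq
        simp only [le_refl, if_pos, Nat.not_succ_le_self, if_neg, hvn]
        exact h2
end Aux

/-- The continuous DAG constraint (NOTEARS): `tr((I + (c/k) A ⊙ A)^k) − k = 0` iff the
directed graph with an edge `i → j` whenever `A i j ≠ 0` has no directed cycle, i.e.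
there is no `m ≥ 1` and no sequence of vertices `i_0, …, i_m` with `i_0 = i_m` and
`A i_s i_{s+1} ≠ 0` for all `0 ≤ s < m`. -/
theorem dag_constraint_iff_acyclic (k : ℕ) (hk : 1 ≤ k)
    (A : Matrix (Fin k) (Fin k) ℝ) (c : ℝ) (hc : 0 < c) :
    ((1 + (c / (k : ℝ)) • (Matrix.hadamard A A)) ^ k).trace - (k : ℝ) = 0 ↔
      ¬ ∃ (m : ℕ), 1 ≤ m ∧ ∃ v : ℕ → Fin k,
        v 0 = v m ∧ ∀ s < m, A (v s) (v (s + 1)) ≠ 0 := by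
  set B : Matrix (Fin k) (Fin k) ℝ := (c / (k : ℝ)) • (Matrix.hadamard A A) with hBdef
  have hkpos : (0 : ℝ) < k := by exact_mod_cast hk
  have hck : 0 < c / (k : ℝ) := div_pos hc hkpos
  have hBval : ∀ i j, B i j = (c / (k : ℝ)) * (A i j * A i j) := by
    intro i j; simp [hBdef, Matrix.hadamard, Matrix.smul_apply]
  have hB0 : ∀ i j, 0 ≤ B i j := by
    intro i j; rw [hBval]; exact mul_nonneg hck.le (mul_self_nonneg _)
  have hBpos : ∀ i j, A i j ≠ 0 → 0 < B i j := fun i j h => by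
    rw [hBval]; exact mul_pos hck (mul_self_pos.mpr h)
  have hBne : ∀ i j, B i j ≠ 0 → A i j ≠ 0 := by
    intro i j h hA
    exact h (by rw [hBval, hA, mul_zero, mul_zero])
  -- expansion of the trace
  have hexp : ((1 + B) ^ k).trace
      = ∑ m ∈ Finset.range (k + 1), (k.choose m : ℝ) * (B ^ m).trace := by
    rw [add_comm, (Commute.one_right B).add_pow, Matrix.trace_sum]
    refine Finset.sum_congr rfl fun m _ => ?_
    rw [one_pow, mul_one, ← (Nat.cast_commute (k.choose m) (B ^ m)).eq,
      ← nsmul_eq_mul, Matrix.trace_smul, nsmul_eq_mul]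
  have htrnn : ∀ n : ℕ, 0 ≤ (B ^ n).trace := fun n =>
    Finset.sum_nonneg fun i _ => pow_entry_nonneg B hB0 n i i
  have hsplit : ((1 + B) ^ k).trace - (k : ℝ)
      = ∑ i ∈ Finset.range k, (k.choose (i+1) : ℝ) * (B ^ (i+1)).trace := by
    rw [hexp, Finset.sum_range_succ']
    simp [Matrix.trace_one]
  rw [hsplit]
  have hterm_nn : ∀ i ∈ Finset.range k, 0 ≤ (k.choose (i+1) : ℝ) * (B ^ (i+1)).trace :=
    fun i _ => mul_nonneg (by positivity) (htrnn _)
  rw [Finset.sum_eq_zero_iff_of_nonneg hterm_nn]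
  constructor
  · -- zero trace terms → no cycle
    rintro h ⟨m, hm, v, hv0, hve⟩
    -- shorten the cycle to length d with 1 ≤ d ≤ k
    obtain ⟨d, hd1, hdk, w, hw, hwe⟩ :
        ∃ d, 1 ≤ d ∧ d ≤ k ∧ ∃ w : ℕ → Fin k, w 0 = w d ∧ ∀ s < d, A (w s) (w (s+1)) ≠ 0 := by
      rcases le_or_gt m k with hmk | hmk
      · exact ⟨m, hm, hmk, v, hv0, hve⟩
      · obtain ⟨a, b, hab, hvab⟩ :=
          Fintype.exists_ne_map_eq_of_card_lt (fun t : Fin (k+1) => v t)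
            (by simp)
        wlog hlt : (a : ℕ) < (b : ℕ) generalizing a b
        · exact this b a hab.symm hvab.symm
            (lt_of_le_of_ne (not_lt.mp hlt) (by simpa [Fin.ext_iff] using hab.symm))
        refine ⟨b - a, Nat.le_sub_of_add_le (by omega), by omega,
          fun s => v (a + s), by show v (↑a + 0) = v (↑a + (↑b - ↑a)); rw [Nat.add_zero, Nat.add_sub_cancel' hlt.le]; exact hvab, ?_⟩
        intro s hs
        have h1 : (a : ℕ) + s + 1 ≤ (b : ℕ) := by omega
        have h2 : (a : ℕ) + s < m := by
          have : (b : ℕ) ≤ k := by omega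
          omega
        have := hve ((a : ℕ) + s) h2
        simpa [Nat.add_assoc] using this
    have hpos : 0 < (B ^ d) (w 0) (w d) :=
      path_pow_pos B hB0 w d fun s hs => hBpos _ _ (hwe s hs)
    have htr : 0 < (B ^ d).trace := by
      rw [hw] at hpos
      calc (0:ℝ) < (B ^ d) (w d) (w d) := hpos
        _ ≤ ∑ i, (B ^ d) i i :=
          Finset.single_le_sum (fun i _ => pow_entry_nonneg B hB0 d i i) (Finset.mem_univ _)
    have := h (d - 1) (Finset.mem_range.mpr (by omega))
    rw [Nat.sub_add_cancel hd1] at this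
    have hch : 0 < (k.choose d : ℝ) := by
      exact_mod_cast Nat.choose_pos hdk
    nlinarith
  · -- no cycle → zero trace terms
    intro hnc i _
    have : (B ^ (i+1)).trace = 0 := by
      by_contra htr
      obtain ⟨j, -, hj⟩ := Finset.exists_ne_zero_of_sum_ne_zero htr
      obtain ⟨v, hv0, hvn, hve⟩ := pow_entry_path B (i+1) j j hj
      exact hnc ⟨i+1, Nat.succ_le_succ (Nat.zero_le i), v, by rw [hv0, hvn],
        fun s hs => hBne _ _ (hve s hs)⟩
    rw [this, mul_zero]
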